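/- arXiv:1912.00633 — 5 statements merged into one kernel-verified Lean document; each statement's English description precedes it below -/
import Mathlib

section
/- Let g(x₁,x₂) = (x₁² − 1)² + (x₁x₂ − 1)² and h(x₁,x₂) = (x₁² − 1)² + (x₂² − 1)² on ℝ². Then g⁻¹(0) ⊆ h⁻¹(0), yet there are no constants c > 0, α > 0, β > 0 such that |g(x)|^α + |g(x)|^β ≥ c|h(x)| for all x ∈ ℝ². (Indeed, g(1/k, k) → 1 and h(1/k, k) → +∞ as k → ∞.) -/
open Filter Topology

noncomputable def gEx3 : ℝ × ℝ → ℝ := fun x => (x.1 ^ 2 - 1) ^ 2 + (x.1 * x.2 - 1) ^ 2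

noncomputable def hEx3 : ℝ × ℝ → ℝ := fun x => (x.1 ^ 2 - 1) ^ 2 + (x.2 ^ 2 - 1) ^ 2

/-!
On the zero set of `g` we have `x₁² = 1` and `x₁x₂ = 1`, hence `x₂² = x₁²x₂² = 1`, so `h = 0`.
Along the hyperbola `x₁x₂ = 1` the second square of `g` vanishes, so `g(1/k, k) → 1`, while
`h(1/k, k) ≥ (k² − 1)² → ∞`. Any inequality `|g|^α + |g|^β ≥ c|h|` would force the left side,
which converges along this sequence, to tend to infinity.
-/

theorem not_forall_rpow_add_rpow_ge_of_tendsto {X : Type*} {l : Filter X} [l.NeBot]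
    {g h : X → ℝ} {a : ℝ} (hg : Tendsto g l (𝓝 a)) (hh : Tendsto h l atTop)
    {c α β : ℝ} (hc : 0 < c) (hα : 0 ≤ α) (hβ : 0 ≤ β) :
    ¬ ∀ x, |g x| ^ α + |g x| ^ β ≥ c * |h x| := by
  intro H
  have hconv : Tendsto (fun x => |g x| ^ α + |g x| ^ β) l (𝓝 (|a| ^ α + |a| ^ β)) :=
    (hg.abs.rpow_const (Or.inr hα)).add (hg.abs.rpow_const (Or.inr hβ))
  have hdiv : Tendsto (fun x => c * |h x|) l atTop :=
    (tendsto_abs_atTop_atTop.comp hh).const_mul_atTop hc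
  exact not_tendsto_atTop_of_tendsto_nhds hconv (tendsto_atTop_mono H hdiv)

theorem hEx3_eq_zero_of_gEx3_eq_zero {x : ℝ × ℝ} (hx : gEx3 x = 0) : hEx3 x = 0 := by
  obtain ⟨hsq, hprod⟩ : (x.1 ^ 2 - 1) ^ 2 = 0 ∧ (x.1 * x.2 - 1) ^ 2 = 0 :=
    (add_eq_zero_iff_of_nonneg (sq_nonneg _) (sq_nonneg _)).mp hx
  have h₁ : x.1 ^ 2 = 1 := by linarith [pow_eq_zero_iff two_ne_zero |>.mp hsq]
  have h₂ : x.1 * x.2 = 1 := by linarith [pow_eq_zero_iff two_ne_zero |>.mp hprod]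
  have h₃ : x.2 ^ 2 = 1 := by
    calc x.2 ^ 2 = x.1 ^ 2 * x.2 ^ 2 := by rw [h₁, one_mul]
      _ = (x.1 * x.2) ^ 2 := by ring
      _ = 1 := by rw [h₂, one_pow]
  simp only [hEx3, h₁, h₃, sub_self, zero_pow two_ne_zero, add_zero]

theorem gEx3_one_div_self {t : ℝ} (ht : t ≠ 0) : gEx3 (1 / t, t) = ((1 / t) ^ 2 - 1) ^ 2 := by
  simp [gEx3, ht]

theorem sq_sub_one_sq_le_hEx3 (x : ℝ × ℝ) : (x.2 ^ 2 - 1) ^ 2 ≤ hEx3 x :=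
  le_add_of_nonneg_left (sq_nonneg _)

theorem tendsto_gEx3_one_div_self :
    Tendsto (fun k : ℕ => gEx3 (1 / (k : ℝ), (k : ℝ))) atTop (𝓝 1) := by
  have hlim : Tendsto (fun k : ℕ => ((1 / (k : ℝ)) ^ 2 - 1) ^ 2) atTop (𝓝 1) := by
    have hcont : Continuous fun t : ℝ => (t ^ 2 - 1) ^ 2 := by fun_prop
    exact (hcont.tendsto' 0 1 (by norm_num)).comp tendsto_one_div_atTop_nhds_zero_nat
  refine hlim.congr' ?_
  filter_upwards [eventually_ne_atTop 0] with k hk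
  exact (gEx3_one_div_self (Nat.cast_ne_zero.mpr hk)).symm

theorem tendsto_hEx3_one_div_self :
    Tendsto (fun k : ℕ => hEx3 (1 / (k : ℝ), (k : ℝ))) atTop atTop := by
  have hsq : Tendsto (fun k : ℕ => ((k : ℝ) ^ 2 - 1) ^ 2) atTop atTop :=
    (tendsto_pow_atTop two_ne_zero).comp <| tendsto_atTop_add_const_right _ (-1) <|
      (tendsto_pow_atTop two_ne_zero).comp tendsto_natCast_atTop_atTop
  exact tendsto_atTop_mono (fun k => sq_sub_one_sq_le_hEx3 _) hsq

/-- For `g = (x₁²−1)² + (x₁x₂−1)²` and `h = (x₁²−1)² + (x₂²−1)²` we have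
`g⁻¹(0) ⊆ h⁻¹(0)`, yet no global Łojasiewicz inequality
`|g|^α + |g|^β ≥ c|h|` holds; indeed `g(1/k, k) → 1` and `h(1/k, k) → +∞`. -/
theorem no_global_lojasiewicz_example :
    (∀ x : ℝ × ℝ, gEx3 x = 0 → hEx3 x = 0) ∧
    (¬ ∃ c α β : ℝ, 0 < c ∧ 0 < α ∧ 0 < β ∧
      ∀ x : ℝ × ℝ, |gEx3 x| ^ α + |gEx3 x| ^ β ≥ c * |hEx3 x|) ∧
    Tendsto (fun k : ℕ => gEx3 (1 / (k : ℝ), (k : ℝ))) atTop (𝓝 1) ∧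
    Tendsto (fun k : ℕ => hEx3 (1 / (k : ℝ), (k : ℝ))) atTop atTop := by
  refine ⟨fun x => hEx3_eq_zero_of_gEx3_eq_zero, ?_, tendsto_gEx3_one_div_self,
    tendsto_hEx3_one_div_self⟩
  rintro ⟨c, α, β, hc, hα, hβ, H⟩
  exact not_forall_rpow_add_rpow_ge_of_tendsto tendsto_gEx3_one_div_self
    tendsto_hEx3_one_div_self hc hα.le hβ.le fun k => H _
end

section
/- Let g(x₁,x₂) = x₁² + x₂⁴ and h(x₁,x₂) = x₁² + x₂². Then for all x ∈ ℝ²: |g(x)|^{1/2} + |g(x)| ≥ |h(x)|, while there exist no constants c > 0 and α > 0 such that |g(x)|^α ≥ c|h(x)| for all x ∈ ℝ². -/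
noncomputable def gEx4 : ℝ × ℝ → ℝ := fun x => x.1 ^ 2 + x.2 ^ 4

noncomputable def hEx4 : ℝ × ℝ → ℝ := fun x => x.1 ^ 2 + x.2 ^ 2

open Real

/-! The inequality splits as `x₂² ≤ √g` plus `x₁² ≤ g`.
No single power works: on the axis `x₂ = 0` we have `g = h = s`, so `s ^ α ≥ c s` forces
`α ≥ 1`, while on the axis `x₁ = 0` we have `g = h² = s²`, so `s ^ (2α) ≥ c s` forces `2α ≤ 1`. -/

lemma gEx4_nonneg (x : ℝ × ℝ) : 0 ≤ gEx4 x := by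
  unfold gEx4; positivity

lemma hEx4_nonneg (x : ℝ × ℝ) : 0 ≤ hEx4 x := by
  unfold hEx4; positivity

lemma hEx4_le_sqrt_gEx4_add_gEx4 (x : ℝ × ℝ) : hEx4 x ≤ √(gEx4 x) + gEx4 x := by
  have h_snd : x.2 ^ 2 ≤ √(gEx4 x) :=
    Real.le_sqrt_of_sq_le (by unfold gEx4; nlinarith [sq_nonneg x.1])
  have h_fst : x.1 ^ 2 ≤ gEx4 x := by unfold gEx4; nlinarith [sq_nonneg (x.2 ^ 2)]
  unfold hEx4
  linarith

lemma gEx4_sqrt_zero {s : ℝ} (hs : 0 ≤ s) : gEx4 (√s, 0) = s := by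
  simp [gEx4, sq_sqrt hs]

lemma hEx4_sqrt_zero {s : ℝ} (hs : 0 ≤ s) : hEx4 (√s, 0) = s := by
  simp [hEx4, sq_sqrt hs]

lemma gEx4_zero_sqrt {s : ℝ} (hs : 0 ≤ s) : gEx4 (0, √s) = s ^ 2 := by
  rw [gEx4, show √s ^ 4 = (√s ^ 2) ^ 2 by ring, sq_sqrt hs]
  ring

lemma hEx4_zero_sqrt {s : ℝ} (hs : 0 ≤ s) : hEx4 (0, √s) = s := by
  simp [hEx4, sq_sqrt hs]

/-- The witness is `s = (c / 2) ^ (β - 1)⁻¹`, for which `s ^ (β - 1) = c / 2`. -/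
lemma exists_rpow_lt_mul_self {β c : ℝ} (hβ : β ≠ 1) (hc : 0 < c) :
    ∃ s > 0, s ^ β < c * s := by
  have hγ : β - 1 ≠ 0 := sub_ne_zero.mpr hβ
  set s := (c / 2) ^ (β - 1)⁻¹
  have hs : 0 < s := by positivity
  have hsγ : s ^ (β - 1) = c / 2 := by
    rw [← rpow_mul (by positivity), inv_mul_cancel₀ hγ, rpow_one]
  refine ⟨s, hs, ?_⟩
  calc s ^ β = s ^ (β - 1) * s := by rw [← rpow_add_one hs.ne', sub_add_cancel]
    _ = c / 2 * s := by rw [hsγ]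
    _ < c * s := by linarith [mul_pos hc hs]

/-- For `g = x₁² + x₂⁴` and `h = x₁² + x₂²`: the inequality
`|g|^{1/2} + |g| ≥ |h|` holds everywhere, while no inequality of the form
`|g|^α ≥ c|h|` (with `c, α > 0`) holds on all of `ℝ²`. -/
theorem two_exponents_needed_example :
    (∀ x : ℝ × ℝ, |gEx4 x| ^ ((1 : ℝ) / 2) + |gEx4 x| ≥ |hEx4 x|) ∧
    ¬ ∃ c α : ℝ, 0 < c ∧ 0 < α ∧ ∀ x : ℝ × ℝ, |gEx4 x| ^ α ≥ c * |hEx4 x| := by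
  refine ⟨fun x => ?_, ?_⟩
  · rw [abs_of_nonneg (gEx4_nonneg x), abs_of_nonneg (hEx4_nonneg x), ← sqrt_eq_rpow]
    exact hEx4_le_sqrt_gEx4_add_gEx4 x
  · rintro ⟨c, α, hc, -, hbound⟩
    rcases lt_or_ge α 1 with hα | hα
    · obtain ⟨s, hs, hlt⟩ := exists_rpow_lt_mul_self hα.ne hc
      have h := hbound (√s, 0)
      rw [gEx4_sqrt_zero hs.le, hEx4_sqrt_zero hs.le, abs_of_pos hs] at h
      linarith
    · obtain ⟨s, hs, hlt⟩ := exists_rpow_lt_mul_self (β := 2 * α) (by linarith) hc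
      have h := hbound (0, √s)
      rw [gEx4_zero_sqrt hs.le, hEx4_zero_sqrt hs.le, abs_of_pos hs, abs_of_pos (by positivity),
        ← rpow_two, ← rpow_mul hs.le] at h
      linarith
end

section
/- Let g, h : ℝⁿ → ℝ be polynomials, c > 0, 0 < α ≤ 1, δ > 0, with g⁻¹(0) ⊆ h⁻¹(0) and |g(x)|^α ≥ c|h(x)| whenever |g(x)| ≤ δ. Let ℓ = ⌊1/α⌋ + 1. Then the function f₀ : ℝⁿ → ℝ defined by f₀(x) = h(x)^{2ℓ}/g(x)² if g(x) ≠ 0 and f₀(x) = 0 if g(x) = 0, is continuous on ℝⁿ. -/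
open MvPolynomial

open Classical in
/-- If `|g|^α ≥ c|h|` on `{|g| ≤ δ}` with `0 < α ≤ 1`, `c, δ > 0`, and
`g⁻¹(0) ⊆ h⁻¹(0)`, then with `ℓ = ⌊1/α⌋ + 1` the function `f₀` equal to
`h^{2ℓ}/g²` where `g ≠ 0` and to `0` where `g = 0` is continuous on `ℝⁿ`. -/
theorem continuity_of_quotient (n : ℕ) (g h : MvPolynomial (Fin n) ℝ)
    (c α δ : ℝ) (hc : 0 < c) (hα0 : 0 < α) (hα1 : α ≤ 1) (hδ : 0 < δ)
    (hzero : ∀ x : Fin n → ℝ, eval x g = 0 → eval x h = 0)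
    (hloc : ∀ x : Fin n → ℝ, |eval x g| ≤ δ → |eval x g| ^ α ≥ c * |eval x h|) :
    Continuous (fun x : Fin n → ℝ =>
      if eval x g ≠ 0 then eval x h ^ (2 * (Nat.floor (1 / α) + 1)) / eval x g ^ 2
      else 0) := by
  set ℓ : ℕ := Nat.floor (1 / α) + 1 with hℓdef
  set e : ℕ := 2 * ℓ with hedef
  have hcg : Continuous fun x : Fin n → ℝ => eval x g := g.continuous_eval
  have hch : Continuous fun x : Fin n → ℝ => eval x h := h.continuous_eval
  have hℓα : 1 < (ℓ : ℝ) * α := by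
    have h1 : 1 / α < (ℓ : ℝ) := by
      have := Nat.lt_succ_floor (1 / α)
      rw [Nat.succ_eq_add_one] at this
      push_cast [hℓdef]
      push_cast at this
      linarith
    calc (1:ℝ) = (1 / α) * α := by field_simp
    _ < ℓ * α := mul_lt_mul_of_pos_right h1 hα0
  have hp : 0 < (e : ℝ) * α - 2 := by
    have : (e : ℝ) = 2 * ℓ := by push_cast [hedef]; ring
    rw [this]; nlinarith
  rw [continuous_iff_continuousAt]
  intro x₀
  by_cases hg : eval x₀ g ≠ 0
  · have hopen : IsOpen {x : Fin n → ℝ | eval x g ≠ 0} :=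
      isOpen_ne.preimage hcg
    have hmem : {x : Fin n → ℝ | eval x g ≠ 0} ∈ nhds x₀ := hopen.mem_nhds hg
    have hca : ContinuousAt (fun x => eval x h ^ e / eval x g ^ 2) x₀ :=
      ((hch.pow e).continuousAt).div ((hcg.pow 2).continuousAt) (pow_ne_zero 2 hg)
    exact hca.congr (Filter.eventuallyEq_of_mem hmem (fun x hx => by simp only [Set.mem_setOf_eq] at hx; simp [hx]))
  · push_neg at hg
    unfold ContinuousAt
    have hF0 : (fun x : Fin n → ℝ => if eval x g ≠ 0 then eval x h ^ e / eval x g ^ 2 else 0) x₀ = 0 := by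
      simp [hg]
    rw [hF0]
    -- bound function
    set G : (Fin n → ℝ) → ℝ := fun x => c⁻¹ ^ e * |eval x g| ^ ((e : ℝ) * α - 2) with hGdef
    have hGtendsto : Filter.Tendsto G (nhds x₀) (nhds 0) := by
      have h1 : Filter.Tendsto (fun x => |eval x g|) (nhds x₀) (nhds 0) := by
        have h0 : Filter.Tendsto (fun x => |eval x g|) (nhds x₀) (nhds |eval x₀ g|) :=
          (hcg.abs).continuousAt
        rwa [hg, abs_zero] at h0
      have h2 : Filter.Tendsto (fun t : ℝ => t ^ ((e:ℝ) * α - 2)) (nhds 0) (nhds 0) := by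
        have := (Real.continuousAt_rpow_const 0 ((e:ℝ)*α - 2) (Or.inr hp.le))
        have h0 : (0:ℝ) ^ ((e:ℝ)*α - 2) = 0 := Real.zero_rpow (ne_of_gt hp)
        simpa [ContinuousAt, h0] using this
      have := (h2.comp h1).const_mul (c⁻¹ ^ e)
      simpa [hGdef] using this
    have hmem : {x : Fin n → ℝ | |eval x g| < δ} ∈ nhds x₀ := by
      have : IsOpen {x : Fin n → ℝ | |eval x g| < δ} :=
        isOpen_lt (hcg.abs) continuous_const
      exact this.mem_nhds (by simp [hg, hδ])
    refine squeeze_zero_norm' ?_ hGtendsto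
    filter_upwards [hmem] with x hx
    by_cases hgx : eval x g = 0
    · simp only [hgx, ne_eq, not_true_eq_false, if_false]
      simp only [norm_zero, hGdef]
      positivity
    · have hloc' := hloc x (le_of_lt hx)
      have hgabs : 0 < |eval x g| := abs_pos.mpr hgx
      have hhle : |eval x h| ≤ |eval x g| ^ α * c⁻¹ := by
        rw [ge_iff_le] at hloc'
        rw [← le_div_iff₀' hc] at hloc'
        simpa [div_eq_mul_inv, mul_comm] using hloc'
      simp only [hgx, ne_eq, not_false_eq_true, if_true]
      rw [Real.norm_eq_abs, abs_div, abs_pow, abs_pow]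
      have key : |eval x h| ^ e ≤ (|eval x g| ^ α * c⁻¹) ^ e :=
        pow_le_pow_left₀ (abs_nonneg _) hhle e
      have hrw : (|eval x g| ^ α * c⁻¹) ^ e = c⁻¹ ^ e * |eval x g| ^ ((e:ℝ) * α) := by
        rw [mul_pow, ← Real.rpow_natCast (|eval x g| ^ α) e, ← Real.rpow_mul (abs_nonneg _)]
        ring_nf
      have hdiv : |eval x g| ^ ((e:ℝ) * α) / |eval x g| ^ 2
          = |eval x g| ^ ((e:ℝ) * α - 2) := by
        rw [← Real.rpow_natCast (|eval x g|) 2, ← Real.rpow_sub hgabs]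
        norm_num
      calc |eval x h| ^ e / |eval x g| ^ 2
          ≤ (c⁻¹ ^ e * |eval x g| ^ ((e:ℝ) * α)) / |eval x g| ^ 2 := by
            rw [← hrw]
            exact div_le_div_of_nonneg_right key (by positivity) |>.trans_eq rfl
        _ = c⁻¹ ^ e * (|eval x g| ^ ((e:ℝ) * α) / |eval x g| ^ 2) := by ring
        _ = G x := by rw [hdiv]
end

section
/- Let 0 ≤ d ≤ n be integers, let q¹, …, q^{n−d} be linearly independent vectors in ℤⁿ, and let S ⊆ ℤ₊ⁿ satisfy ⟨q^j, κ⟩ ≥ 0 for all κ ∈ S and all j. Then there exist vectors q̃¹, …, q̃ⁿ ∈ ℤⁿ such that: (1) span{q̃¹,…,q̃^k} = span{q¹,…,q^k} for k = 1,…,n−d (with suitable extension {q^{n−d+1},…,q^n} chosen among the standard basis vectors making q¹,…,qⁿ linearly independent, and span{q̃¹,…,q̃^k} = span{q¹,…,q^k} for all k ≤ n); (2) ⟨q̃^j, κ⟩ ≥ 0 for all κ ∈ S and j = 1,…,n; (3) the convex hull of {0, q̃¹, …, q̃ⁿ} contains no lattice points other than {0, q̃¹, …, q̃ⁿ}; and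 (4) |det(q̃¹, …, q̃ⁿ)| = 1. -/
/-!
Complete `q` by standard basis vectors to a basis `e` of `ℚⁿ` and take coordinates with respect to
`e`, scaled by `det²` to make them integral. Let `L k` be the lattice of integer vectors whose
coordinates vanish from index `k` on. Choose `q̃ᵏ ∈ L (k+1)` whose `k`-th coordinate generates
the cyclic group of `k`-th coordinates of `L (k+1)`, and add a large multiple of
`q̃¹ + ⋯ + q̃ᵏ⁻¹` (whose coordinates below `k` are positive) to make all coordinates of `q̃ᵏ`
nonnegative. Then `q̃¹, …, q̃ᵏ` is a `ℤ`-basis of `L k`, which gives the spans and, for `k = n`,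
`det = ±1`. Nonnegativity on `S` holds because every `q̃ʲ` is a nonnegative combination of the
`e`'s. The inverse of the unimodular matrix is integral, so the barycentric coordinates of a
lattice point of the simplex are integers, nonnegative and of sum at most one: the point is a
vertex.
-/

/-- An integer vector viewed in `ℝⁿ`. -/
noncomputable def zToR {n : ℕ} (v : Fin n → ℤ) : Fin n → ℝ := fun l => (v l : ℝ)

open Submodule Set Matrix

section Extension

variable {n : ℕ}

theorem exists_linearIndependent_snoc_single {m : ℕ} {v : Fin m → Fin n → ℤ}
    (hv : LinearIndependent ℤ v) (hm : m < n) :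
    ∃ i, LinearIndependent ℤ (Fin.snoc v (Pi.single i 1) : Fin (m + 1) → Fin n → ℤ) := by
  let castQ : (Fin n → ℤ) →ₗ[ℤ] Fin n → ℚ :=
    (Int.castAddHom ℚ).toIntLinearMap.compLeft (Fin n)
  have hcastQ : Function.Injective castQ := fun x y h =>
    funext fun l => Int.cast_injective (congrFun h l)
  obtain ⟨i, hi⟩ : ∃ i, Pi.single i 1 ∉ span ℚ (range (castQ ∘ v)) := by
    by_contra! h
    have htop : span ℚ (range (castQ ∘ v)) = ⊤ := by
      rw [eq_top_iff, ← (Pi.basisFun ℚ (Fin n)).span_eq, span_le]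
      rintro _ ⟨i, rfl⟩
      simpa using h i
    have := finrank_range_le_card (R := ℚ) (castQ ∘ v)
    rw [Set.finrank, htop, finrank_top, Module.finrank_fin_fun, Fintype.card_fin] at this
    omega
  have hsingle : castQ (Pi.single i 1) = Pi.single i 1 := by
    funext l
    by_cases hl : l = i <;> simp [castQ, hl]
  refine ⟨i, LinearIndependent.of_comp castQ ?_⟩
  rw [Fin.comp_snoc, hsingle]
  exact (hv.map' castQ (LinearMap.ker_eq_bot.2 hcastQ)).finSnoc_of_not_mem_span_over hi

theorem exists_linearIndependent_extend_single {m k : ℕ} (hmk : m ≤ k) (hkn : k ≤ n)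
    {v : Fin m → Fin n → ℤ} (hv : LinearIndependent ℤ v) :
    ∃ e : Fin k → Fin n → ℤ, (∀ (j : Fin k) (hj : (j : ℕ) < m), e j = v ⟨j, hj⟩) ∧
      (∀ j : Fin k, m ≤ (j : ℕ) → ∃ i, e j = Pi.single i 1) ∧
      LinearIndependent ℤ e := by
  induction k, hmk using Nat.le_induction with
  | base => exact ⟨v, fun _ _ => rfl, fun j hj => absurd j.isLt (by omega), hv⟩
  | succ k hmk ih =>
    obtain ⟨e, he_v, he_single, he⟩ := ih (by omega)
    obtain ⟨i, hi⟩ := exists_linearIndependent_snoc_single he (by omega)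
    refine ⟨Fin.snoc e (Pi.single i 1), fun j hj => ?_, fun j hj => ?_, hi⟩
    all_goals rcases Fin.eq_castSucc_or_eq_last j with ⟨j, rfl⟩ | rfl
    · simpa using he_v j hj
    · rw [Fin.val_last] at hj
      omega
    · simpa using he_single j hj
    · exact ⟨i, Fin.snoc_last _ _⟩

end Extension

section Flag

variable {M : Type*} [AddCommGroup M] {n : ℕ} (c : M →ₗ[ℤ] Fin n → ℤ)

def coordFlag (m : ℕ) : Submodule ℤ M :=
  ⨅ (j : Fin n) (_ : m ≤ (j : ℕ)), LinearMap.ker ((LinearMap.proj j).comp c)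

variable {c}

theorem mem_coordFlag {m : ℕ} {x : M} :
    x ∈ coordFlag c m ↔ ∀ j : Fin n, m ≤ (j : ℕ) → c x j = 0 := by
  simp [coordFlag, Submodule.mem_iInf]

theorem coordFlag_eq_top : coordFlag c n = ⊤ :=
  eq_top_iff.2 fun _ _ => mem_coordFlag.2 fun j hj => absurd j.isLt (not_lt.2 hj)

theorem coordFlag_mono {m m' : ℕ} (h : m ≤ m') : coordFlag c m ≤ coordFlag c m' :=
  fun _ hx => mem_coordFlag.2 fun j hj => mem_coordFlag.1 hx j (h.trans hj)

theorem image_subset_coordFlag {t : Fin n → M} (ht : ∀ i : Fin n, t i ∈ coordFlag c (i + 1))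
    (k : ℕ) : t '' {i | (i : ℕ) < k} ⊆ coordFlag c k :=
  image_subset_iff.2 fun (i : Fin n) (hi : (i : ℕ) < k) => coordFlag_mono hi (ht i)

theorem Submodule.exists_mem_apply_pos_dvd (N : Submodule ℤ M) (f : M →ₗ[ℤ] ℤ)
    (h : ∃ x ∈ N, f x ≠ 0) : ∃ b ∈ N, 0 < f b ∧ ∀ x ∈ N, f b ∣ f x := by
  obtain ⟨g, hg⟩ := (IsPrincipalIdealRing.principal (N.map f)).principal
  have hdvd : ∀ x ∈ N, g ∣ f x := fun x hx =>
    Ideal.mem_span_singleton.1 (show f x ∈ span ℤ {g} from hg ▸ mem_map_of_mem hx)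
  obtain ⟨b, hb, hbg⟩ : ∃ b ∈ N, f b = g := mem_map.1 (hg ▸ mem_span_singleton_self g)
  obtain ⟨x, hx, hfx⟩ := h
  have hg0 : g ≠ 0 := by
    rintro rfl
    exact hfx (zero_dvd_iff.1 (hdvd x hx))
  rcases hg0.lt_or_gt with hneg | hpos
  · exact ⟨-b, N.neg_mem hb, by simpa [hbg], fun y hy => by simpa [hbg] using hdvd y hy⟩
  · exact ⟨b, hb, hbg ▸ hpos, fun y hy => hbg ▸ hdvd y hy⟩

theorem add_sum_abs_mul_nonneg {ι : Type*} [Fintype ι] (a : ι → ℤ) (i : ι) {b : ℤ}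
    (hb : 0 < b) : 0 ≤ a i + (∑ j, |a j|) * b := by
  have h₁ : |a i| ≤ ∑ j, |a j| :=
    Finset.single_le_sum (fun j _ => abs_nonneg (a j)) (Finset.mem_univ i)
  nlinarith [neg_abs_le (a i), abs_nonneg (a i)]

theorem exists_nonneg_mem_coordFlag_succ (K : Fin n) {p : M} (hp : p ∈ coordFlag c K)
    (hp_pos : ∀ j, j < K → 0 < c p j) (hK : ∃ x ∈ coordFlag c (K + 1), c x K ≠ 0) :
    ∃ w ∈ coordFlag c (K + 1), (∀ j, 0 ≤ c w j) ∧ 0 < c w K ∧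
      ∀ x ∈ coordFlag c (K + 1), c w K ∣ c x K := by
  obtain ⟨b, hb, hb_pos, hb_dvd⟩ :=
    (coordFlag c (K + 1)).exists_mem_apply_pos_dvd ((LinearMap.proj K).comp c) hK
  simp only [LinearMap.coe_comp, Function.comp_apply, LinearMap.coe_proj,
    Function.eval] at hb_pos hb_dvd
  have hwK : c (b + (∑ j, |c b j|) • p) K = c b K := by
    simp [mem_coordFlag.1 hp K le_rfl]
  refine ⟨b + (∑ j, |c b j|) • p,
    add_mem hb (smul_mem _ _ (coordFlag_mono (Nat.le_succ _) hp)), fun j => ?_,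
    hwK ▸ hb_pos, fun x hx => hwK ▸ hb_dvd x hx⟩
  rcases lt_trichotomy j K with hj | rfl | hj
  · simpa using add_sum_abs_mul_nonneg (fun l => c b l) j (hp_pos j hj)
  · exact hwK ▸ hb_pos.le
  · simp [mem_coordFlag.1 hb j hj, mem_coordFlag.1 hp j hj.le]

theorem coordFlag_succ_le_span_insert {K : Fin n} {s : Set M} {w : M}
    (hs : coordFlag c K ≤ span ℤ s) (hw : w ∈ coordFlag c (K + 1))
    (hdvd : ∀ x ∈ coordFlag c (K + 1), c w K ∣ c x K) :
    coordFlag c (K + 1) ≤ span ℤ (insert w s) := by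
  intro x hx
  obtain ⟨a, ha⟩ := hdvd x hx
  have hxw : x - a • w ∈ coordFlag c K := by
    refine mem_coordFlag.2 fun j hj => ?_
    rcases hj.eq_or_lt with hjK | hjK
    · rw [show j = K from Fin.ext hjK.symm]
      simp [ha, mul_comm]
    · simp [mem_coordFlag.1 hx j hjK, mem_coordFlag.1 hw j hjK]
  rw [← sub_add_cancel x (a • w)]
  exact add_mem (span_mono (subset_insert _ _) (hs hxw))
    (smul_mem _ _ (subset_span (mem_insert _ _)))

theorem exists_nonneg_triangular_family (hc : Function.Injective c)
    (hflag : ∀ K : Fin n, ∃ x ∈ coordFlag c (K + 1), c x K ≠ 0) {k : ℕ} (hk : k ≤ n) :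
    ∃ t : Fin n → M,
      (∀ i : Fin n, (i : ℕ) < k →
        t i ∈ coordFlag c (i + 1) ∧ (∀ j, 0 ≤ c (t i) j) ∧ 0 < c (t i) i) ∧
      ∀ m ≤ k, coordFlag c m ≤ span ℤ (t '' {i | (i : ℕ) < m}) := by
  induction k with
  | zero =>
    refine ⟨0, fun i hi => absurd hi (Nat.not_lt_zero _), fun m hm x hx => ?_⟩
    obtain rfl : m = 0 := Nat.le_zero.1 hm
    have : x = 0 := hc (funext fun j => by simpa using mem_coordFlag.1 hx j (Nat.zero_le _))
    exact this ▸ zero_mem _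
  | succ k ih =>
    obtain ⟨t, ht, ht_span⟩ := ih (by omega)
    set K : Fin n := ⟨k, hk⟩
    set p := ∑ i ∈ Finset.univ.filter (fun i : Fin n => (i : ℕ) < k), t i
    have hp : p ∈ coordFlag c K := sum_mem fun i hi =>
      coordFlag_mono (Finset.mem_filter.1 hi).2 (ht i (Finset.mem_filter.1 hi).2).1
    have hp_pos : ∀ j, j < K → 0 < c p j := by
      intro j hj
      rw [map_sum, Finset.sum_apply]
      refine (ht j hj).2.2.trans_le (Finset.single_le_sum (f := fun i => c (t i) j)
        (fun i hi => (ht i (Finset.mem_filter.1 hi).2).2.1 j) ?_)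
      exact Finset.mem_filter.2 ⟨Finset.mem_univ _, Fin.lt_def.1 hj⟩
    obtain ⟨w, hw, hw_nonneg, hw_pos, hw_dvd⟩ :=
      exists_nonneg_mem_coordFlag_succ K hp hp_pos (hflag K)
    have ht_eq : ∀ m ≤ k,
        Function.update t K w '' {i | (i : ℕ) < m} = t '' {i | (i : ℕ) < m} :=
      fun m hm => image_congr fun i (hi : (i : ℕ) < m) =>
        Function.update_of_ne (Fin.ne_of_lt (Fin.lt_def.2 (show (i : ℕ) < k by omega))) _ _
    refine ⟨Function.update t K w, fun i hi => ?_, fun m hm => ?_⟩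
    · rcases (Nat.lt_succ_iff.1 hi).eq_or_lt with hik | hik
      · obtain rfl : i = K := Fin.ext hik
        simpa using ⟨hw, hw_nonneg, hw_pos⟩
      · rw [Function.update_of_ne (Fin.ne_of_lt (Fin.lt_def.2 hik))]
        exact ht i hik
    · rcases (Nat.le_succ_iff.1 hm) with hmk | rfl
      · exact ht_eq m hmk ▸ ht_span m hmk
      · have hins : Function.update t K w '' {i | (i : ℕ) < k + 1} =
            insert w (t '' {i | (i : ℕ) < k}) := by
          rw [show {i : Fin n | (i : ℕ) < k + 1} = insert K {i : Fin n | (i : ℕ) < k} by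
            ext i; simp only [mem_insert_iff, mem_ofPred_eq, Fin.ext_iff, K]; omega,
            image_insert_eq, ht_eq k le_rfl, Function.update_self]
        rw [hins]
        exact coordFlag_succ_le_span_insert (K := K) (ht_span k le_rfl) hw hw_dvd

end Flag

section Coordinates

variable {n : ℕ} (v : Fin n → Fin n → ℤ)

theorem transpose_of_mulVec_eq_sum (a : Fin n → ℤ) : (of v)ᵀ *ᵥ a = ∑ i, a i • v i := by
  rw [mulVec_transpose, vecMul_eq_sum]
  rfl

theorem LinearIndependent.det_transpose_of_ne_zero (hv : LinearIndependent ℤ v) :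
    (of v)ᵀ.det ≠ 0 := by
  intro h
  obtain ⟨a, ha, hav⟩ := exists_mulVec_eq_zero_iff.2 h
  rw [transpose_of_mulVec_eq_sum] at hav
  exact ha (funext (Fintype.linearIndependent_iff.1 hv a hav))

theorem isUnit_det_transpose_of_span_eq_top (hv : span ℤ (range v) = ⊤) :
    IsUnit (of v)ᵀ.det := by
  refine ((of v)ᵀ.isUnit_iff_isUnit_det).1 (mulVec_surjective_iff_isUnit.1 fun x => ?_)
  obtain ⟨a, ha⟩ :=
    (mem_span_range_iff_exists_fun ℤ).1 (hv ▸ mem_top : x ∈ span ℤ (range v))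
  exact ⟨a, (transpose_of_mulVec_eq_sum v a).trans ha⟩

/-- Coordinates with respect to the columns `v i`, scaled by `det²` so that they are integral
(`det • adjugate = det² • inverse`) and have the sign of the true coordinates. -/
noncomputable def scaledCoord : (Fin n → ℤ) →ₗ[ℤ] Fin n → ℤ :=
  (of v)ᵀ.det • (of v)ᵀ.adjugate.mulVecLin

theorem scaledCoord_apply (x : Fin n → ℤ) :
    scaledCoord v x = (of v)ᵀ.det • ((of v)ᵀ.adjugate *ᵥ x) := rfl

theorem sum_scaledCoord_smul (x : Fin n → ℤ) :
    ∑ i, scaledCoord v x i • v i = ((of v)ᵀ.det * (of v)ᵀ.det) • x := by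
  rw [← transpose_of_mulVec_eq_sum, scaledCoord_apply, mulVec_smul, mulVec_mulVec, mul_adjugate,
    smul_mulVec, one_mulVec, smul_smul]

theorem scaledCoord_self (i : Fin n) :
    scaledCoord v (v i) = Pi.single i ((of v)ᵀ.det * (of v)ᵀ.det) := by
  have hvi : v i = (of v)ᵀ *ᵥ Pi.single i 1 := by
    rw [mulVec_single_one]; rfl
  rw [scaledCoord_apply, hvi, mulVec_mulVec, adjugate_mul, smul_mulVec, one_mulVec,
    smul_smul, ← Pi.single_smul, smul_eq_mul, mul_one]

variable {v}

theorem scaledCoord_injective (hv : (of v)ᵀ.det ≠ 0) :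
    Function.Injective (scaledCoord v) := by
  intro x y h
  have hxy := sum_scaledCoord_smul v x
  rw [h, sum_scaledCoord_smul] at hxy
  exact smul_right_injective _ (mul_ne_zero hv hv) hxy.symm

theorem mem_coordFlag_scaledCoord_self (i : Fin n) :
    v i ∈ coordFlag (scaledCoord v) (i + 1) :=
  mem_coordFlag.2 fun j hj => by
    rw [scaledCoord_self, Pi.single_eq_of_ne (Fin.ne_of_gt (Fin.lt_def.2 hj))]

theorem scaledCoord_self_ne_zero (hv : (of v)ᵀ.det ≠ 0) (i : Fin n) :
    scaledCoord v (v i) i ≠ 0 := by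
  rw [scaledCoord_self, Pi.single_eq_same]
  exact mul_ne_zero hv hv

theorem smul_mem_span_of_mem_coordFlag {m : ℕ} {x : Fin n → ℤ}
    (hx : x ∈ coordFlag (scaledCoord v) m) :
    ((of v)ᵀ.det * (of v)ᵀ.det) • x ∈ span ℤ (v '' {i | (i : ℕ) < m}) := by
  rw [← sum_scaledCoord_smul]
  refine sum_mem fun i _ => ?_
  by_cases hi : (i : ℕ) < m
  · exact smul_mem _ _ (subset_span ⟨i, hi, rfl⟩)
  · rw [mem_coordFlag.1 hx i (not_lt.1 hi), zero_smul]
    exact zero_mem _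

theorem dotProduct_nonneg_of_scaledCoord_nonneg (hv : (of v)ᵀ.det ≠ 0) {x y : Fin n → ℤ}
    (hvy : ∀ i, 0 ≤ v i ⬝ᵥ y) (hx : ∀ i, 0 ≤ scaledCoord v x i) : 0 ≤ x ⬝ᵥ y := by
  have h : ((of v)ᵀ.det * (of v)ᵀ.det) * (x ⬝ᵥ y) =
      ∑ i, scaledCoord v x i * (v i ⬝ᵥ y) := by
    rw [← smul_eq_mul, ← smul_dotProduct, ← sum_scaledCoord_smul, sum_dotProduct]
    simp only [smul_dotProduct, smul_eq_mul]
  exact (mul_nonneg_iff_of_pos_left (mul_self_pos.2 hv)).1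
    (h ▸ Finset.sum_nonneg fun i _ => mul_nonneg (hx i) (hvy i))

end Coordinates

section Lattice

variable {n : ℕ}

theorem zToR_zero : zToR (0 : Fin n → ℤ) = 0 := funext fun _ => Int.cast_zero

theorem zToR_add (x y : Fin n → ℤ) : zToR (x + y) = zToR x + zToR y :=
  funext fun _ => Int.cast_add _ _

theorem zToR_zsmul (a : ℤ) (x : Fin n → ℤ) : zToR (a • x) = (a : ℝ) • zToR x :=
  funext fun _ => Int.cast_mul _ _

theorem zToR_mem_span {s : Set (Fin n → ℤ)} {x : Fin n → ℤ} (hx : x ∈ span ℤ s) :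
    zToR x ∈ span ℝ (zToR '' s) := by
  induction hx using Submodule.span_induction with
  | mem x hx => exact subset_span (mem_image_of_mem _ hx)
  | zero => exact zToR_zero ▸ zero_mem _
  | add x y _ _ hx hy => exact zToR_add x y ▸ add_mem hx hy
  | smul a x _ hx => exact zToR_zsmul a x ▸ smul_mem _ _ hx

theorem span_zToR_image_eq {s N : Set (Fin n → ℤ)} (hsN : s ⊆ N)
    (hN : ∀ x ∈ N, ∃ a : ℤ, a ≠ 0 ∧ a • x ∈ span ℤ s) :
    span ℝ (zToR '' s) = span ℝ (zToR '' N) := by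
  refine le_antisymm (span_mono (image_mono hsN)) (span_le.2 ?_)
  rintro _ ⟨x, hx, rfl⟩
  obtain ⟨a, ha, hax⟩ := hN x hx
  have := zToR_mem_span hax
  rwa [zToR_zsmul, smul_mem_iff _ (Int.cast_ne_zero.2 ha)] at this

theorem nonneg_and_sum_le_one_of_mem_convexHull {E ι : Type*} [AddCommGroup E] [Module ℝ E]
    [Fintype ι] [DecidableEq ι] (f : E →ₗ[ℝ] ι → ℝ) {w : ι → E}
    (hw : ∀ j, f (w j) = Pi.single j 1) {x : E} (hx : x ∈ convexHull ℝ (insert 0 (range w))) :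
    0 ≤ f x ∧ ∑ l, f x l ≤ 1 := by
  have hconv : Convex ℝ {y : ι → ℝ | 0 ≤ y ∧ ∑ l, y l ≤ 1} :=
    (convex_Ici 0).inter (convex_halfSpace_le (f := fun y : ι → ℝ => ∑ l, y l)
      ⟨fun y z => Finset.sum_add_distrib, fun a y => by simp [Finset.mul_sum]⟩ 1)
  refine convexHull_min ?_ (hconv.linear_preimage f) hx
  rintro _ (rfl | ⟨j, rfl⟩)
  · simp
  · simp [hw j, Pi.single_nonneg]

theorem eq_zero_or_eq_single_of_sum_le_one {ι : Type*} [Fintype ι] [DecidableEq ι]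
    {z : ι → ℤ} (h0 : ∀ i, 0 ≤ z i) (h1 : ∑ i, z i ≤ 1) :
    z = 0 ∨ ∃ j, z = Pi.single j 1 := by
  by_cases hz : z = 0
  · exact Or.inl hz
  obtain ⟨j, hj : z j ≠ 0⟩ := Function.ne_iff.1 hz
  have hle : ∀ s : Finset ι, ∑ i ∈ s, z i ≤ 1 := fun s =>
    (Finset.sum_le_sum_of_subset_of_nonneg (Finset.subset_univ s) fun i _ _ => h0 i).trans h1
  refine Or.inr ⟨j, funext fun i => ?_⟩
  by_cases hij : i = j
  · subst hij
    have := hle {i}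
    rw [Finset.sum_singleton] at this
    rw [Pi.single_eq_same]
    have := h0 i
    omega
  · have := hle {i, j}
    rw [Finset.sum_pair hij] at this
    rw [Pi.single_eq_of_ne hij]
    have := h0 i
    have := h0 j
    omega

theorem convexHull_insert_zero_inter_intPoints (v : Fin n → Fin n → ℤ)
    (hv : IsUnit (of v)ᵀ.det) :
    convexHull ℝ (insert (0 : Fin n → ℝ) (range fun j => zToR (v j)))
        ∩ {x | ∀ l, ∃ m : ℤ, x l = m} = insert 0 (range fun j => zToR (v j)) := by
  set A := (of v)ᵀ
  let f : (Fin n → ℝ) →ₗ[ℝ] Fin n → ℝ := (A⁻¹.map ((↑) : ℤ → ℝ)).mulVecLin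
  have hf : ∀ u, f (zToR u) = zToR (A⁻¹ *ᵥ u) := fun u =>
    funext fun l => (RingHom.map_mulVec (Int.castRingHom ℝ) A⁻¹ u l).symm
  have hvj : ∀ j, v j = A *ᵥ Pi.single j 1 := fun j => by rw [mulVec_single_one]; rfl
  have hw : ∀ j, f (zToR (v j)) = Pi.single j 1 := fun j => by
    rw [hf, hvj, mulVec_mulVec, nonsing_inv_mul A hv, one_mulVec]
    funext l
    by_cases hl : l = j <;> simp [zToR, hl]
  apply subset_antisymm
  · rintro x ⟨hx, hint⟩
    choose u hu using hint
    obtain rfl : x = zToR u := funext hu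
    obtain ⟨h0, h1⟩ := nonneg_and_sum_le_one_of_mem_convexHull f hw hx
    rw [hf] at h0 h1
    have hu : u = A *ᵥ (A⁻¹ *ᵥ u) := by
      rw [mulVec_mulVec, mul_nonsing_inv A hv, one_mulVec]
    simp only [zToR] at h1
    rcases eq_zero_or_eq_single_of_sum_le_one (fun l => Int.cast_nonneg_iff.1 (h0 l))
      (by exact_mod_cast h1) with hz | ⟨j, hz⟩
    · left
      rw [hu, hz, mulVec_zero, zToR_zero]
    · exact Or.inr ⟨j, by rw [hu, hz, ← hvj]⟩
  · intro x hx
    refine ⟨subset_convexHull ℝ _ hx, ?_⟩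
    rcases hx with rfl | ⟨j, rfl⟩
    · exact fun l => ⟨0, by simp⟩
    · exact fun l => ⟨v j l, rfl⟩

end Lattice

theorem integer_lemma_general (n d : ℕ) (q : Fin (n - d) → (Fin n → ℤ))
    (hq : LinearIndependent ℤ q) (S : Set (Fin n → ℕ))
    (hS : ∀ κ ∈ S, ∀ j, 0 ≤ ∑ l, q j l * (κ l : ℤ)) :
    ∃ ext qt : Fin n → (Fin n → ℤ),
      (∀ (j : Fin n) (hj : (j : ℕ) < n - d), ext j = q ⟨(j : ℕ), hj⟩) ∧
      (∀ j : Fin n, n - d ≤ (j : ℕ) →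
        ∃ i : Fin n, ext j = fun l => if l = i then 1 else 0) ∧
      LinearIndependent ℤ ext ∧
      (∀ k : ℕ, k ≤ n →
        Submodule.span ℝ (zToR '' (qt '' {j : Fin n | (j : ℕ) < k}))
          = Submodule.span ℝ (zToR '' (ext '' {j : Fin n | (j : ℕ) < k}))) ∧
      (∀ κ ∈ S, ∀ j : Fin n, 0 ≤ ∑ l, qt j l * (κ l : ℤ)) ∧
      (convexHull ℝ (insert (0 : Fin n → ℝ) (Set.range fun j => zToR (qt j)))
          ∩ {v : Fin n → ℝ | ∀ l, ∃ m : ℤ, v l = (m : ℝ)}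
        = insert (0 : Fin n → ℝ) (Set.range fun j => zToR (qt j))) ∧
      |(Matrix.of fun i j => qt j i).det| = 1 := by
  obtain ⟨ext, hext_q, hext_single, hext⟩ :=
    exists_linearIndependent_extend_single (Nat.sub_le n d) le_rfl hq
  have hdet := hext.det_transpose_of_ne_zero
  obtain ⟨qt, hqt, hgen⟩ := exists_nonneg_triangular_family (scaledCoord_injective hdet)
    (fun K => ⟨ext K, mem_coordFlag_scaledCoord_self K, scaledCoord_self_ne_zero hdet K⟩) le_rfl
  have hunit : IsUnit (of qt)ᵀ.det := isUnit_det_transpose_of_span_eq_top qt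
    (eq_top_iff.2 (by simpa [coordFlag_eq_top] using hgen n le_rfl))
  have hext_S : ∀ κ ∈ S, ∀ i, 0 ≤ ext i ⬝ᵥ fun l => (κ l : ℤ) := by
    intro κ hκ i
    by_cases hi : (i : ℕ) < n - d
    · rw [hext_q i hi]
      exact hS κ hκ _
    · obtain ⟨i', hi'⟩ := hext_single i (not_lt.1 hi)
      simp [hi']
  refine ⟨ext, qt, hext_q, fun j hj => ?_, hext, fun k hk => ?_,
    fun κ hκ j => dotProduct_nonneg_of_scaledCoord_nonneg hdet (hext_S κ hκ) (hqt j j.isLt).2.1,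
    convexHull_insert_zero_inter_intPoints qt hunit, Int.isUnit_iff_abs_eq.1 hunit⟩
  · obtain ⟨i, hi⟩ := hext_single j hj
    exact ⟨i, hi.trans (funext fun l => Pi.single_apply i 1 l)⟩
  · rw [span_zToR_image_eq (image_subset_coordFlag (fun i : Fin n => (hqt i i.isLt).1) k)
        fun x hx => ⟨1, one_ne_zero, (one_smul ℤ x).symm ▸ hgen k hk hx⟩,
      span_zToR_image_eq (image_subset_coordFlag mem_coordFlag_scaledCoord_self k)
        fun x hx => ⟨_, mul_ne_zero hdet hdet, smul_mem_span_of_mem_coordFlag hx⟩]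

/-- Lemma on completing a family of integer vectors nonnegative on `S` to a
unimodular basis nonnegative on `S`.  Given linearly independent
`q¹, …, q^{n−d} ∈ ℤⁿ` with `⟨q^j, κ⟩ ≥ 0` for all `κ ∈ S ⊆ ℤ₊ⁿ`, there are an
extension `ext` of the family by standard basis vectors which is linearly
independent, and vectors `q̃¹, …, q̃ⁿ ∈ ℤⁿ` such that (1) the spans of the first `k`
of the `q̃`'s and of the `ext`'s agree for every `k ≤ n`; (2) `⟨q̃^j, κ⟩ ≥ 0` on `S`;
(3) the convex hull of `{0, q̃¹, …, q̃ⁿ}` contains no other lattice points; and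
(4) `|det(q̃¹, …, q̃ⁿ)| = 1`. -/
theorem integer_lemma (n d : ℕ) (hd : d ≤ n) (q : Fin (n - d) → (Fin n → ℤ))
    (hq : LinearIndependent ℤ q) (S : Set (Fin n → ℕ))
    (hS : ∀ κ ∈ S, ∀ j, 0 ≤ ∑ l, q j l * (κ l : ℤ)) :
    ∃ ext qt : Fin n → (Fin n → ℤ),
      (∀ (j : Fin n) (hj : (j : ℕ) < n - d), ext j = q ⟨(j : ℕ), hj⟩) ∧
      (∀ j : Fin n, n - d ≤ (j : ℕ) →
        ∃ i : Fin n, ext j = fun l => if l = i then 1 else 0) ∧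
      LinearIndependent ℤ ext ∧
      (∀ k : ℕ, k ≤ n →
        Submodule.span ℝ (zToR '' (qt '' {j : Fin n | (j : ℕ) < k}))
          = Submodule.span ℝ (zToR '' (ext '' {j : Fin n | (j : ℕ) < k}))) ∧
      (∀ κ ∈ S, ∀ j : Fin n, 0 ≤ ∑ l, qt j l * (κ l : ℤ)) ∧
      (convexHull ℝ (insert (0 : Fin n → ℝ) (Set.range fun j => zToR (qt j)))
          ∩ {v : Fin n → ℝ | ∀ l, ∃ m : ℤ, v l = (m : ℝ)}
        = insert (0 : Fin n → ℝ) (Set.range fun j => zToR (qt j))) ∧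
      |(Matrix.of fun i j => qt j i).det| = 1 :=
  integer_lemma_general n d q hq S hS
end

section
/- Let g, h : ℝⁿ → ℝ be polynomials with g⁻¹(0) ⊆ h⁻¹(0) and K̃_∞(g) = ∅. Assume that for all sufficiently small |r| > 0, each level set h⁻¹(±r) is either empty or a smooth hypersurface and K̃_∞(g|_{{h = ±r}}) = ∅. Then there is no sequence of the first type for (g,h): there do not exist δ > 0 and a sequence {x^k} ⊂ ℝⁿ with ‖x^k‖ → ∞, g(x^k) → 0, and |h(x^k)| ≥ δ. -/
open MvPolynomial Filter Topology

/-- The gradient of a polynomial function. -/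
noncomputable def polyGrad {n : ℕ} (f : MvPolynomial (Fin n) ℝ) (x : Fin n → ℝ) :
    Fin n → ℝ :=
  fun j => eval x (pderiv j f)

/-- The gradient of `g` restricted to a level set of `h`: the orthogonal projection of
`∇g(x)` onto the tangent space of `{h = r}` at `x` (the orthogonal complement of
`∇h(x)`). -/
noncomputable def restrictedGrad {n : ℕ} (g h : MvPolynomial (Fin n) ℝ)
    (x : Fin n → ℝ) : Fin n → ℝ :=
  polyGrad g x -
    ((∑ j, polyGrad g x j * polyGrad h x j) / (∑ j, polyGrad h x j * polyGrad h x j)) •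
      polyGrad h x

/-!
Let `x_k` be a sequence of the first type and fix a level `0 < r ≤ δ` below `r0`. On the closed
set `C = {r ≤ |h|}` apply Ekeland's principle to `|g|` at `x_k`, with `ε_k = |g(x_k)|` and radius
`ρ_k = 1 + ‖x_k‖/2`: this yields `y_k ∈ C` with `‖y_k‖ → ∞`, `g(y_k) → 0`, minimising
`|g| + σ_k ‖· - y_k‖` on `C`, where `σ_k = ε_k / ρ_k → 0`. As `g⁻¹(0) ⊆ h⁻¹(0)` and `|h| ≥ r` on
`C`, `g(y_k) ≠ 0`, so `|g|` is differentiable at `y_k` and its derivative is at least `-σ_k ‖v‖`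
along every direction `v` pointing into `C`. At interior points this gives `‖∇g(y_k)‖ ≤ σ_k`; on
`|h| = r` the admissible directions contain the half-space `±∇h(y_k) ⬝ v > 0`, which bounds the
projection of `∇g(y_k)` onto `∇h(y_k)^⊥`. A subsequence then contradicts `K̃_∞(g) = ∅` or
`K̃_∞(g|_{h = ±r}) = ∅`.
-/

section Ekeland

variable {E : Type*} [NormedAddCommGroup E]

theorem exists_isMinOn_add_mul_norm_sub [ProperSpace E] {f : E → ℝ} {C : Set E}
    (hf : ContinuousOn f C) (hC : IsClosed C) (hf0 : ∀ z ∈ C, 0 ≤ f z) {x : E} (hx : x ∈ C)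
    {ρ : ℝ} (hρ : 0 < ρ) :
    ∃ y ∈ C, ‖y - x‖ ≤ ρ ∧ f y ≤ f x ∧ IsMinOn (fun z => f z + f x / ρ * ‖z - y‖) C y := by
  set σ := f x / ρ
  have hσ : 0 ≤ σ := div_nonneg (hf0 x hx) hρ.le
  have hK : IsCompact (C ∩ Metric.closedBall x ρ) := (isCompact_closedBall x ρ).inter_left hC
  have hxK : x ∈ C ∩ Metric.closedBall x ρ := ⟨hx, Metric.mem_closedBall_self hρ.le⟩
  obtain ⟨y, ⟨hyC, hyx⟩, hmin⟩ := hK.exists_isMinOn (f := fun z => f z + σ * ‖z - x‖) ⟨x, hxK⟩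
    ((hf.mono Set.inter_subset_left).add (by fun_prop))
  rw [isMinOn_iff] at hmin
  rw [Metric.mem_closedBall, dist_eq_norm] at hyx
  have hyx' : f y + σ * ‖y - x‖ ≤ f x := by simpa using hmin x hxK
  refine ⟨y, hyC, hyx, by nlinarith [norm_nonneg (y - x)], isMinOn_iff.2 fun z hzC => ?_⟩
  have htri : ‖z - x‖ ≤ ‖z - y‖ + ‖y - x‖ := norm_sub_le_norm_sub_add_norm_sub z y x
  simp only [sub_self, norm_zero, mul_zero, add_zero]
  by_cases hzx : ‖z - x‖ ≤ ρ
  · have := hmin z ⟨hzC, by rwa [Metric.mem_closedBall, dist_eq_norm]⟩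
    nlinarith
  · -- outside the ball, `σ ‖z - y‖ > σ (ρ - ‖y - x‖) = f x - σ ‖y - x‖ ≥ f y`
    have hσρ : σ * ρ = f x := div_mul_cancel₀ _ hρ.ne'
    nlinarith [hf0 z hzC]

theorem exists_seq_isMinOn_add_mul_norm_sub [ProperSpace E] {f : E → ℝ} {C : Set E}
    (hf : ContinuousOn f C) (hC : IsClosed C) (hf0 : ∀ z ∈ C, 0 ≤ f z) {x : ℕ → E}
    (hxC : ∀ k, x k ∈ C) (hx : Tendsto (fun k => ‖x k‖) atTop atTop)
    (hfx : Tendsto (fun k => f (x k)) atTop (𝓝 0)) :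
    ∃ (y : ℕ → E) (σ : ℕ → ℝ), Tendsto (fun k => ‖y k‖) atTop atTop ∧
      Tendsto (fun k => f (y k)) atTop (𝓝 0) ∧ Tendsto σ atTop (𝓝 0) ∧
      ∀ k, 0 ≤ σ k ∧ y k ∈ C ∧ IsMinOn (fun z => f z + σ k * ‖z - y k‖) C (y k) := by
  set ρ : ℕ → ℝ := fun k => 1 + ‖x k‖ / 2
  have hρ : ∀ k, 1 ≤ ρ k := fun k => by simp only [ρ]; linarith [norm_nonneg (x k)]
  choose y hyC hyx hfy hmin using fun k =>
    exists_isMinOn_add_mul_norm_sub hf hC hf0 (hxC k) (zero_lt_one.trans_le (hρ k))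
  have hσ0 : ∀ k, 0 ≤ f (x k) / ρ k := fun k => div_nonneg (hf0 _ (hxC k)) (by linarith [hρ k])
  refine ⟨y, fun k => f (x k) / ρ k, ?_, ?_, ?_, fun k => ⟨hσ0 k, hyC k, hmin k⟩⟩
  · refine tendsto_atTop_mono (fun k => ?_)
      ((hx.atTop_div_const two_pos).atTop_add (tendsto_const_nhds (x := -1)))
    have := norm_sub_norm_le (x k) (y k)
    rw [norm_sub_rev] at this
    simp only [ρ] at hyx
    linarith [hyx k]
  · exact squeeze_zero (fun k => hf0 _ (hyC k)) hfy hfx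
  · exact squeeze_zero hσ0 (fun k => div_le_self (hf0 _ (hxC k)) (hρ k)) hfx

end Ekeland

section FirstOrder

variable {E : Type*} [NormedAddCommGroup E] [NormedSpace ℝ E]

theorem IsMinOn.neg_mul_norm_le_of_hasFDerivAt {f : E → ℝ} {f' : E →L[ℝ] ℝ} {C : Set E}
    {σ : ℝ} {y v : E} (hmin : IsMinOn (fun z => f z + σ * ‖z - y‖) C y)
    (hf : HasFDerivAt f f' y) (hv : ∀ᶠ t in 𝓝[>] (0 : ℝ), y + t • v ∈ C) :
    -(σ * ‖v‖) ≤ f' v := by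
  refine ge_of_tendsto (hf.hasLineDerivAt v).tendsto_slope_zero_right ?_
  filter_upwards [hv, self_mem_nhdsWithin] with t htC (ht : 0 < t)
  have := isMinOn_iff.1 hmin _ htC
  simp only [sub_self, norm_zero, mul_zero, add_zero, add_sub_cancel_left, norm_smul,
    Real.norm_eq_abs, abs_of_pos ht] at this
  rw [smul_eq_mul, le_inv_mul_iff₀ ht]
  linarith

theorem HasFDerivAt.eventually_lt_add_smul {ψ : E → ℝ} {ψ' : E →L[ℝ] ℝ} {y v : E}
    (hψ : HasFDerivAt ψ ψ' y) (hv : 0 < ψ' v) :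
    ∀ᶠ t in 𝓝[>] (0 : ℝ), ψ y < ψ (y + t • v) := by
  filter_upwards [(hψ.hasLineDerivAt v).tendsto_slope_zero_right.eventually
    (eventually_gt_nhds hv), self_mem_nhdsWithin] with t hslope (ht : 0 < t)
  rw [smul_eq_mul] at hslope
  linarith [(mul_pos_iff_of_pos_left (inv_pos.2 ht)).1 hslope]

end FirstOrder

section DotProduct

variable {ι : Type*} [Fintype ι]

theorem sq_norm_le_dotProduct_self (u : ι → ℝ) : ‖u‖ ^ 2 ≤ u ⬝ᵥ u := by
  have hsqrt : ‖u‖ ≤ √(u ⬝ᵥ u) := by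
    refine (pi_norm_le_iff_of_nonneg (Real.sqrt_nonneg _)).2 fun j => ?_
    rw [Real.norm_eq_abs, ← Real.sqrt_sq_eq_abs, sq]
    exact Real.sqrt_le_sqrt
      (Finset.single_le_sum (fun i _ => mul_self_nonneg (u i)) (Finset.mem_univ j))
  calc ‖u‖ ^ 2 ≤ √(u ⬝ᵥ u) ^ 2 := pow_le_pow_left₀ (norm_nonneg u) hsqrt 2
    _ = u ⬝ᵥ u := Real.sq_sqrt (Finset.sum_nonneg fun i _ => mul_self_nonneg (u i))

theorem norm_le_of_dotProduct_self_le {u : ι → ℝ} {σ : ℝ} (hσ : 0 ≤ σ)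
    (h : u ⬝ᵥ u ≤ σ * ‖u‖) : ‖u‖ ≤ σ := by
  nlinarith [sq_norm_le_dotProduct_self u, norm_nonneg u]

theorem norm_le_of_forall_neg_mul_norm_le_dotProduct {w : ι → ℝ} {σ : ℝ} (hσ : 0 ≤ σ)
    (h : ∀ v, -(σ * ‖v‖) ≤ w ⬝ᵥ v) : ‖w‖ ≤ σ := by
  refine norm_le_of_dotProduct_self_le hσ ?_
  simpa [dotProduct_neg] using h (-w)

noncomputable def vectorRejection (N w : ι → ℝ) : ι → ℝ :=
  w - (w ⬝ᵥ N / N ⬝ᵥ N) • N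

theorem dotProduct_vectorRejection (N w : ι → ℝ) : N ⬝ᵥ vectorRejection N w = 0 := by
  by_cases hN : N = 0
  · simp [hN]
  · rw [vectorRejection, dotProduct_sub, dotProduct_smul, smul_eq_mul,
      div_mul_cancel₀ _ (mt dotProduct_self_eq_zero.1 hN), dotProduct_comm, sub_self]

theorem vectorRejection_smul_left {a : ℝ} (ha : a ≠ 0) (N w : ι → ℝ) :
    vectorRejection (a • N) w = vectorRejection N w := by
  by_cases hN : N = 0
  · simp [hN]
  have hNN : N ⬝ᵥ N ≠ 0 := mt dotProduct_self_eq_zero.1 hN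
  simp only [vectorRejection, dotProduct_smul, smul_dotProduct, smul_eq_mul, smul_smul]
  congr 2
  field_simp

theorem vectorRejection_smul_right (N : ι → ℝ) (b : ℝ) (w : ι → ℝ) :
    vectorRejection N (b • w) = b • vectorRejection N w := by
  simp only [vectorRejection, smul_dotProduct, smul_eq_mul, smul_sub, smul_smul, mul_div_assoc]

/-- By continuity the bound on the open half-space `0 < N ⬝ᵥ v` extends to the hyperplane
`N ⬝ᵥ v = 0`, which contains the rejection of `w` from `N`. -/
theorem norm_vectorRejection_le {N w : ι → ℝ} {σ : ℝ} (hσ : 0 ≤ σ) (hN : N ≠ 0)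
    (h : ∀ v, 0 < N ⬝ᵥ v → -(σ * ‖v‖) ≤ w ⬝ᵥ v) : ‖vectorRejection N w‖ ≤ σ := by
  set wR := vectorRejection N w
  have hNwR : N ⬝ᵥ wR = 0 := dotProduct_vectorRejection N w
  have hwwR : w ⬝ᵥ wR = wR ⬝ᵥ wR := by
    calc w ⬝ᵥ wR = (w - (w ⬝ᵥ N / N ⬝ᵥ N) • N) ⬝ᵥ wR := by
          rw [sub_dotProduct, smul_dotProduct, hNwR, smul_zero, sub_zero]
      _ = wR ⬝ᵥ wR := rfl
  have hcont : Continuous fun τ : ℝ => w ⬝ᵥ (-wR + τ • N) + σ * ‖-wR + τ • N‖ := by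
    simp only [dotProduct_add, dotProduct_smul, smul_eq_mul]
    fun_prop
  have hlim : 0 ≤ w ⬝ᵥ (-wR + (0 : ℝ) • N) + σ * ‖-wR + (0 : ℝ) • N‖ := by
    refine ge_of_tendsto ((hcont.tendsto 0).mono_left (nhdsWithin_le_nhds (s := Set.Ioi 0))) ?_
    filter_upwards [self_mem_nhdsWithin] with τ (hτ : 0 < τ)
    have hpos : 0 < N ⬝ᵥ (-wR + τ • N) := by
      rw [dotProduct_add, dotProduct_neg, hNwR, dotProduct_smul, smul_eq_mul]
      simpa using mul_pos hτ (Matrix.dotProduct_self_star_pos_iff.2 hN)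
    linarith [h _ hpos]
  rw [zero_smul, add_zero, dotProduct_neg, hwwR, norm_neg] at hlim
  exact norm_le_of_dotProduct_self_le hσ (by linarith)

end DotProduct

theorem norm_sign_smul {F : Type*} [SeminormedAddCommGroup F] [NormedSpace ℝ F] {a : ℝ}
    (ha : a ≠ 0) (w : F) : ‖(SignType.sign a : ℝ) • w‖ = ‖w‖ := by
  rcases ha.lt_or_gt with h | h <;> simp [sign_neg, sign_pos, h]

namespace MvPolynomial

variable {ι : Type*} [Fintype ι]

noncomputable def evalFDeriv (f : MvPolynomial ι ℝ) (x : ι → ℝ) : (ι → ℝ) →L[ℝ] ℝ :=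
  ∑ j, eval x (pderiv j f) • ContinuousLinearMap.proj j

theorem evalFDeriv_apply (f : MvPolynomial ι ℝ) (x v : ι → ℝ) :
    evalFDeriv f x v = (fun j => eval x (pderiv j f)) ⬝ᵥ v := by
  simp [evalFDeriv, dotProduct]

theorem hasFDerivAt_eval (f : MvPolynomial ι ℝ) (x : ι → ℝ) :
    HasFDerivAt (fun y => eval y f) (evalFDeriv f x) x := by
  classical
  induction f using MvPolynomial.induction_on with
  | C a =>
    simp only [eval_C]
    refine (hasFDerivAt_const a x).congr_fderiv (ContinuousLinearMap.ext fun v => ?_)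
    simp [evalFDeriv_apply]
  | add p q hp hq =>
    simp only [map_add]
    refine (hp.add hq).congr_fderiv (ContinuousLinearMap.ext fun v => ?_)
    simp [evalFDeriv_apply, dotProduct, add_mul, Finset.sum_add_distrib]
  | mul_X p i hp =>
    simp only [map_mul, eval_X]
    refine (hp.mul (ContinuousLinearMap.proj i).hasFDerivAt).congr_fderiv
      (ContinuousLinearMap.ext fun v => ?_)
    simp [evalFDeriv_apply, dotProduct, pderiv_X, Pi.single_apply, apply_ite (eval x), mul_add,
      Finset.sum_add_distrib, Finset.mul_sum, mul_comm, mul_left_comm]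

end MvPolynomial

theorem exists_strictMono_tendsto_norm_zero {E : Type*} [SeminormedAddCommGroup E]
    {P : ℕ → Prop} {u : ℕ → E} {σ : ℕ → ℝ} (hP : ∃ᶠ k in atTop, P k)
    (hσ : Tendsto σ atTop (𝓝 0)) (hu : ∀ k, P k → ‖u k‖ ≤ σ k) :
    ∃ φ : ℕ → ℕ, StrictMono φ ∧ (∀ m, P (φ m)) ∧ Tendsto (fun m => ‖u (φ m)‖) atTop (𝓝 0) := by
  obtain ⟨φ, hφ, hPφ⟩ := extraction_of_frequently_atTop hP
  exact ⟨φ, hφ, hPφ, squeeze_zero (fun m => norm_nonneg _) (fun m => hu _ (hPφ m))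
    (hσ.comp hφ.tendsto_atTop)⟩

section Gradients

variable {n : ℕ}

theorem evalFDeriv_apply_eq_polyGrad_dotProduct (f : MvPolynomial (Fin n) ℝ)
    (x v : Fin n → ℝ) : evalFDeriv f x v = polyGrad f x ⬝ᵥ v :=
  evalFDeriv_apply f x v

theorem restrictedGrad_eq_vectorRejection (g h : MvPolynomial (Fin n) ℝ) (x : Fin n → ℝ) :
    restrictedGrad g h x = vectorRejection (polyGrad h x) (polyGrad g x) :=
  rfl

theorem norm_polyGrad_le_of_isMinOn {g : MvPolynomial (Fin n) ℝ} {C : Set (Fin n → ℝ)}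
    {σ : ℝ} {y : Fin n → ℝ} (hσ : 0 ≤ σ) (hgy : eval y g ≠ 0) (hC : C ∈ 𝓝 y)
    (hmin : IsMinOn (fun z => |eval z g| + σ * ‖z - y‖) C y) : ‖polyGrad g y‖ ≤ σ := by
  have hdir : ∀ v, -(σ * ‖v‖) ≤ ((SignType.sign (eval y g) : ℝ) • polyGrad g y) ⬝ᵥ v := by
    intro v
    have hv : ∀ᶠ t in 𝓝[>] (0 : ℝ), y + t • v ∈ C :=
      nhdsWithin_le_nhds (((continuous_const.add (continuous_id.smul continuous_const)).tendsto'
        0 y (by simp)) hC)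
    simpa [smul_dotProduct, evalFDeriv_apply_eq_polyGrad_dotProduct] using
      hmin.neg_mul_norm_le_of_hasFDerivAt ((hasFDerivAt_eval g y).abs hgy) hv
  simpa [norm_sign_smul hgy] using norm_le_of_forall_neg_mul_norm_le_dotProduct hσ hdir

theorem norm_restrictedGrad_le_of_isMinOn {g h : MvPolynomial (Fin n) ℝ} {σ : ℝ}
    {y : Fin n → ℝ} (hσ : 0 ≤ σ) (hgy : eval y g ≠ 0) (hhy : eval y h ≠ 0)
    (hN : polyGrad h y ≠ 0)
    (hmin : IsMinOn (fun z => |eval z g| + σ * ‖z - y‖) {z | |eval y h| ≤ |eval z h|} y) :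
    ‖restrictedGrad g h y‖ ≤ σ := by
  set sg : ℝ := ↑(SignType.sign (eval y g))
  set sh : ℝ := ↑(SignType.sign (eval y h))
  have hsh : sh ≠ 0 := by rcases hhy.lt_or_gt with hneg | hpos <;> simp [sh, sign_neg, sign_pos, *]
  have hdir : ∀ v, 0 < (sh • polyGrad h y) ⬝ᵥ v →
      -(σ * ‖v‖) ≤ (sg • polyGrad g y) ⬝ᵥ v := by
    intro v hv
    have hadm : ∀ᶠ t in 𝓝[>] (0 : ℝ), y + t • v ∈ {z | |eval y h| ≤ |eval z h|} :=
      (((hasFDerivAt_eval h y).abs hhy).eventually_lt_add_smul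
        (by simpa [smul_dotProduct, evalFDeriv_apply_eq_polyGrad_dotProduct] using hv)).mono
        fun t ht => ht.le
    simpa [smul_dotProduct, evalFDeriv_apply_eq_polyGrad_dotProduct] using
      hmin.neg_mul_norm_le_of_hasFDerivAt ((hasFDerivAt_eval g y).abs hgy) hadm
  have := norm_vectorRejection_le hσ (smul_ne_zero hsh hN) hdir
  rwa [vectorRejection_smul_left hsh, vectorRejection_smul_right, norm_sign_smul hgy,
    ← restrictedGrad_eq_vectorRejection] at this

end Gradients

theorem exists_seq_almost_critical {n : ℕ} {g h : MvPolynomial (Fin n) ℝ}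
    (hzero : ∀ x : Fin n → ℝ, eval x g = 0 → eval x h = 0) {r : ℝ} (hr : 0 < r)
    (hreg : ∀ x : Fin n → ℝ, |eval x h| = r → polyGrad h x ≠ 0) {x : ℕ → Fin n → ℝ}
    (hx : Tendsto (fun k => ‖x k‖) atTop atTop)
    (hgx : Tendsto (fun k => eval (x k) g) atTop (𝓝 0)) (hhx : ∀ k, r ≤ |eval (x k) h|) :
    ∃ (y : ℕ → Fin n → ℝ) (σ : ℕ → ℝ), Tendsto (fun k => ‖y k‖) atTop atTop ∧
      Tendsto (fun k => eval (y k) g) atTop (𝓝 0) ∧ Tendsto σ atTop (𝓝 0) ∧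
      ∀ k, (r < |eval (y k) h| ∧ ‖polyGrad g (y k)‖ ≤ σ k) ∨
        (|eval (y k) h| = r ∧ ‖restrictedGrad g h (y k)‖ ≤ σ k) := by
  obtain ⟨y, σ, hy, hgy, hσ, hyk⟩ := exists_seq_isMinOn_add_mul_norm_sub
    (C := {z | r ≤ |eval z h|}) (continuous_eval g).abs.continuousOn
    (isClosed_le continuous_const (continuous_eval h).abs) (fun _ _ => abs_nonneg _) hhx hx
    (by simpa using hgx.abs)
  refine ⟨y, σ, hy, by simpa using (tendsto_zero_iff_abs_tendsto_zero _).2 hgy, hσ, fun k => ?_⟩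
  obtain ⟨hσk, hyC, hmin⟩ := hyk k
  have hhy : r ≤ |eval (y k) h| := hyC
  have hgy0 : eval (y k) g ≠ 0 := fun hg0 => by
    rw [hzero _ hg0, abs_zero] at hhy
    linarith
  rcases hhy.lt_or_eq with hlt | heq
  · refine .inl ⟨hlt, norm_polyGrad_le_of_isMinOn hσk hgy0 ?_ hmin⟩
    exact mem_of_superset ((isOpen_lt continuous_const (continuous_eval h).abs).mem_nhds hlt)
      fun _ (hz : r < _) => hz.le
  · refine .inr ⟨heq.symm, norm_restrictedGrad_le_of_isMinOn hσk hgy0 ?_ (hreg _ heq.symm)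
      (by rwa [← heq])⟩
    rintro h0
    rw [h0, abs_zero] at heq
    linarith

/-- Suppose `g⁻¹(0) ⊆ h⁻¹(0)`, `K̃_∞(g) = ∅`, and for all sufficiently small `|r| > 0`
the level set `h⁻¹(r)` is empty or a smooth hypersurface and
`K̃_∞(g|_{{h = r}}) = ∅`.  Then there is no sequence of the first type for `(g, h)`. -/
theorem no_first_type_sequence (n : ℕ) (g h : MvPolynomial (Fin n) ℝ)
    (hzero : ∀ x : Fin n → ℝ, eval x g = 0 → eval x h = 0)
    (hKg : ¬ ∃ (y : ℝ) (x : ℕ → Fin n → ℝ),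
      Tendsto (fun k => ‖x k‖) atTop atTop ∧
      Tendsto (fun k => eval (x k) g) atTop (𝓝 y) ∧
      Tendsto (fun k => ‖polyGrad g (x k)‖) atTop (𝓝 0))
    (hlev : ∃ r0 : ℝ, 0 < r0 ∧ ∀ r : ℝ, r ≠ 0 → |r| < r0 →
      (∀ x : Fin n → ℝ, eval x h = r → polyGrad h x ≠ 0) ∧
      ¬ ∃ (t : ℝ) (x : ℕ → Fin n → ℝ),
        (∀ k, eval (x k) h = r) ∧
        Tendsto (fun k => ‖x k‖) atTop atTop ∧
        Tendsto (fun k => eval (x k) g) atTop (𝓝 t) ∧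
        Tendsto (fun k => ‖restrictedGrad g h (x k)‖) atTop (𝓝 0)) :
    ¬ ∃ (δ : ℝ) (x : ℕ → Fin n → ℝ), 0 < δ ∧
      Tendsto (fun k => ‖x k‖) atTop atTop ∧
      Tendsto (fun k => eval (x k) g) atTop (𝓝 0) ∧
      ∀ k, δ ≤ |eval (x k) h| := by
  rintro ⟨δ, x, hδ, hx, hgx, hhx⟩
  obtain ⟨r0, hr0, hlev⟩ := hlev
  obtain ⟨r, hr, hrδ, hrr0⟩ : ∃ r, 0 < r ∧ r ≤ δ ∧ r < r0 :=
    ⟨min δ (r0 / 2), lt_min hδ (half_pos hr0), min_le_left _ _,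
      (min_le_right _ _).trans_lt (half_lt_self hr0)⟩
  have hlev_r : ∀ ρ, |ρ| = r → _ := fun ρ hρ =>
    hlev ρ (by rintro rfl; rw [abs_zero] at hρ; linarith) (hρ ▸ hrr0)
  obtain ⟨y, σ, hy, hgy, hσ, hyk⟩ := exists_seq_almost_critical hzero hr
    (fun z hz => (hlev_r _ hz).1 z rfl) hx hgx fun k => hrδ.trans (hhx k)
  have hboundary : ∀ ρ, |ρ| = r →
      ¬ ∃ᶠ k in atTop, eval (y k) h = ρ ∧ ‖restrictedGrad g h (y k)‖ ≤ σ k := fun ρ hρ hfreq => by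
    obtain ⟨φ, hφ, hφρ, hlim⟩ := exists_strictMono_tendsto_norm_zero hfreq hσ fun _ hk => hk.2
    exact (hlev_r ρ hρ).2
      ⟨0, y ∘ φ, fun m => (hφρ m).1, hy.comp hφ.tendsto_atTop, hgy.comp hφ.tendsto_atTop, hlim⟩
  have hcases : ∃ᶠ k in atTop, (r < |eval (y k) h| ∧ ‖polyGrad g (y k)‖ ≤ σ k) ∨
      (eval (y k) h = r ∧ ‖restrictedGrad g h (y k)‖ ≤ σ k) ∨
      (eval (y k) h = -r ∧ ‖restrictedGrad g h (y k)‖ ≤ σ k) :=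
    Frequently.of_forall fun k => (hyk k).imp_right fun ⟨habs, hle⟩ =>
      ((abs_eq hr.le).1 habs).imp (⟨·, hle⟩) (⟨·, hle⟩)
  simp only [frequently_or_distrib] at hcases
  rcases hcases with hint | hpos | hneg
  · obtain ⟨φ, hφ, -, hlim⟩ := exists_strictMono_tendsto_norm_zero hint hσ fun _ hk => hk.2
    exact hKg ⟨0, y ∘ φ, hy.comp hφ.tendsto_atTop, hgy.comp hφ.tendsto_atTop, hlim⟩
  · exact hboundary r (abs_of_pos hr) hpos
  · exact hboundary (-r) (by rw [abs_neg, abs_of_pos hr]) hneg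
end
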